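/- Let K be a field of characteristic 2, let t ∈ K with t ≠ 0 and t ≠ 1, and let R = K[x1,…,x6]. Let I be the ideal of R generated by x1x3, x1x4, x1x6, x2x4, x2x5, x2x6, x3x5, x3x6, x4x5x6. Then I equals the radical of the ideal J generated by the four polynomials x1x4 + x3x5, x1x3 + x2x6 + x4x5x6, x1x6 + t·x2x5, x2x4 + x3x6. -/
import Mathlib

open MvPolynomial

set_option maxHeartbeats 2000000

section Ex5Aux
open MvPolynomial

section Aux
variable {K : Type*} [CommRing K]

lemma ex5_two_le {i j : Fin 6} (hij : i ≠ j) {μ : Fin 6 →₀ ℕ} (hi : μ i ≠ 0) (hj : μ j ≠ 0) :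
    Finsupp.single i 1 + Finsupp.single j 1 ≤ μ := by
  rw [Finsupp.le_def]
  intro k
  rw [Finsupp.add_apply, Finsupp.single_apply, Finsupp.single_apply]
  by_cases hki : i = k
  · subst hki
    rw [if_pos rfl, if_neg (fun h => hij h.symm)]
    omega
  · rw [if_neg hki]
    by_cases hkj : j = k
    · subst hkj; rw [if_pos rfl]; omega
    · rw [if_neg hkj]; omega

lemma ex5_three_le {i j l : Fin 6} (hij : i ≠ j) (hil : i ≠ l) (hjl : j ≠ l)
    {μ : Fin 6 →₀ ℕ} (hi : μ i ≠ 0) (hj : μ j ≠ 0) (hl : μ l ≠ 0) :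
    Finsupp.single i 1 + Finsupp.single j 1 + Finsupp.single l 1 ≤ μ := by
  rw [Finsupp.le_def]
  intro k
  rw [Finsupp.add_apply, Finsupp.add_apply, Finsupp.single_apply, Finsupp.single_apply,
    Finsupp.single_apply]
  rcases eq_or_ne i k with rfl | h1
  · rw [if_pos rfl, if_neg (fun h => hij h.symm), if_neg (fun h => hil h.symm)]; omega
  · rw [if_neg h1]
    rcases eq_or_ne j k with rfl | h2
    · rw [if_pos rfl, if_neg (fun h => hjl h.symm)]; omega
    · rw [if_neg h2]
      rcases eq_or_ne l k with rfl | h3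
      · rw [if_pos rfl]; omega
      · rw [if_neg h3]; omega

lemma ex5_mono_mem_pair {S : Set (MvPolynomial (Fin 6) K)} (i j : Fin 6)
    (hg : (X i * X j : MvPolynomial (Fin 6) K) ∈ S) (hij : i ≠ j) {μ : Fin 6 →₀ ℕ}
    (hi : μ i ≠ 0) (hj : μ j ≠ 0) (c : K) :
    (monomial μ c : MvPolynomial (Fin 6) K) ∈ Ideal.span S := by
  have hle := ex5_two_le hij hi hj
  have hXX : (X i : MvPolynomial (Fin 6) K) * X j =
      monomial (Finsupp.single i 1 + Finsupp.single j 1) 1 := by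
    rw [← pow_one (X i), ← pow_one (X j), X_pow_eq_monomial, X_pow_eq_monomial,
      monomial_mul, one_mul]
  have key : (monomial μ c : MvPolynomial (Fin 6) K) =
      monomial (μ - (Finsupp.single i 1 + Finsupp.single j 1)) c * (X i * X j) := by
    rw [hXX, monomial_mul, mul_one, tsub_add_cancel_of_le hle]
  rw [key]
  exact Ideal.mul_mem_left _ _ (Ideal.subset_span hg)

lemma ex5_mono_mem_triple {S : Set (MvPolynomial (Fin 6) K)} (i j l : Fin 6)
    (hg : (X i * X j * X l : MvPolynomial (Fin 6) K) ∈ S) (hij : i ≠ j) (hil : i ≠ l)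
    (hjl : j ≠ l) {μ : Fin 6 →₀ ℕ}
    (hi : μ i ≠ 0) (hj : μ j ≠ 0) (hl : μ l ≠ 0) (c : K) :
    (monomial μ c : MvPolynomial (Fin 6) K) ∈ Ideal.span S := by
  have hle := ex5_three_le hij hil hjl hi hj hl
  have hXX : (X i : MvPolynomial (Fin 6) K) * X j * X l =
      monomial (Finsupp.single i 1 + Finsupp.single j 1 + Finsupp.single l 1) 1 := by
    rw [← pow_one (X i), ← pow_one (X j), ← pow_one (X l), X_pow_eq_monomial,
      X_pow_eq_monomial, X_pow_eq_monomial, monomial_mul, monomial_mul, one_mul, one_mul]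
  have key : (monomial μ c : MvPolynomial (Fin 6) K) =
      monomial (μ - (Finsupp.single i 1 + Finsupp.single j 1 + Finsupp.single l 1)) c *
        (X i * X j * X l) := by
    rw [hXX, monomial_mul, mul_one, tsub_add_cancel_of_le hle]
  rw [key]
  exact Ideal.mul_mem_left _ _ (Ideal.subset_span hg)

end Aux




def Ex5Good (μ : Fin 6 →₀ ℕ) : Prop :=
  (μ 0 ≠ 0 ∧ μ 2 ≠ 0) ∨ (μ 0 ≠ 0 ∧ μ 3 ≠ 0) ∨ (μ 0 ≠ 0 ∧ μ 5 ≠ 0) ∨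
  (μ 1 ≠ 0 ∧ μ 3 ≠ 0) ∨ (μ 1 ≠ 0 ∧ μ 4 ≠ 0) ∨ (μ 1 ≠ 0 ∧ μ 5 ≠ 0) ∨
  (μ 2 ≠ 0 ∧ μ 4 ≠ 0) ∨ (μ 2 ≠ 0 ∧ μ 5 ≠ 0) ∨ (μ 3 ≠ 0 ∧ μ 4 ≠ 0 ∧ μ 5 ≠ 0)

section Aux2
variable {K : Type*} [CommRing K]

lemma ex5_coeff_aeval (μ : Fin 6 →₀ ℕ) (q : MvPolynomial (Fin 6) K) :
    ∀ ν : Fin 6 →₀ ℕ, (∀ i, ν i ≠ 0 → μ i ≠ 0) →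
      coeff ν (aeval (fun i => if μ i = 0 then 0 else X i) q) = coeff ν q := by
  induction q using MvPolynomial.induction_on with
  | C a => intro ν _; rw [aeval_C, algebraMap_eq]
  | add p q hp hq => intro ν h; rw [map_add, coeff_add, coeff_add, hp ν h, hq ν h]
  | mul_X p i hp =>
    intro ν h
    rw [map_mul, aeval_X]
    by_cases hi : μ i = 0
    · rw [if_pos hi, mul_zero, coeff_zero, coeff_mul_X' ν i p]
      have hν : ν i = 0 := by
        by_contra hν
        exact (h i hν) hi
      rw [if_neg (by simpa [Finsupp.mem_support_iff] using hν)]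
    · rw [if_neg hi, coeff_mul_X' ν i p, coeff_mul_X' ν i _]
      by_cases hs : i ∈ ν.support
      · rw [if_pos hs, if_pos hs]
        refine hp (ν - Finsupp.single i 1) (fun j hj => h j ?_)
        intro hνj
        apply hj
        rw [Finsupp.tsub_apply, hνj]
        simp
      · rw [if_neg hs, if_neg hs]
  end Aux2




section A3
variable {K : Type*} [CommRing K]

lemma ex5_mem_span_of_good (p : MvPolynomial (Fin 6) K)
    (h : ∀ μ ∈ p.support, (μ 0 ≠ 0 ∧ μ 2 ≠ 0) ∨ (μ 0 ≠ 0 ∧ μ 3 ≠ 0) ∨ (μ 0 ≠ 0 ∧ μ 5 ≠ 0) ∨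
      (μ 1 ≠ 0 ∧ μ 3 ≠ 0) ∨ (μ 1 ≠ 0 ∧ μ 4 ≠ 0) ∨ (μ 1 ≠ 0 ∧ μ 5 ≠ 0) ∨
      (μ 2 ≠ 0 ∧ μ 4 ≠ 0) ∨ (μ 2 ≠ 0 ∧ μ 5 ≠ 0) ∨ (μ 3 ≠ 0 ∧ μ 4 ≠ 0 ∧ μ 5 ≠ 0)) :
    p ∈ Ideal.span ({X 0 * X 2, X 0 * X 3, X 0 * X 5, X 1 * X 3, X 1 * X 4, X 1 * X 5,
        X 2 * X 4, X 2 * X 5, X 3 * X 4 * X 5} : Set (MvPolynomial (Fin 6) K)) := by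
  rw [p.as_sum]
  apply Ideal.sum_mem
  intro μ hμ
  rcases h μ hμ with ⟨h1,h2⟩|⟨h1,h2⟩|⟨h1,h2⟩|⟨h1,h2⟩|⟨h1,h2⟩|⟨h1,h2⟩|⟨h1,h2⟩|⟨h1,h2⟩|⟨h1,h2,h3⟩
  · exact ex5_mono_mem_pair 0 2 (Set.mem_insert _ _) (by decide) h1 h2 _
  · exact ex5_mono_mem_pair 0 3 (Set.mem_insert_of_mem _ (Set.mem_insert _ _)) (by decide) h1 h2 _
  · exact ex5_mono_mem_pair 0 5 (Set.mem_insert_of_mem _ (Set.mem_insert_of_mem _ (Set.mem_insert _ _))) (by decide) h1 h2 _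
  · exact ex5_mono_mem_pair 1 3 (Set.mem_insert_of_mem _ (Set.mem_insert_of_mem _ (Set.mem_insert_of_mem _ (Set.mem_insert _ _)))) (by decide) h1 h2 _
  · exact ex5_mono_mem_pair 1 4 (Set.mem_insert_of_mem _ (Set.mem_insert_of_mem _ (Set.mem_insert_of_mem _ (Set.mem_insert_of_mem _ (Set.mem_insert _ _))))) (by decide) h1 h2 _
  · exact ex5_mono_mem_pair 1 5 (Set.mem_insert_of_mem _ (Set.mem_insert_of_mem _ (Set.mem_insert_of_mem _ (Set.mem_insert_of_mem _ (Set.mem_insert_of_mem _ (Set.mem_insert _ _)))))) (by decide) h1 h2 _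
  · exact ex5_mono_mem_pair 2 4 (Set.mem_insert_of_mem _ (Set.mem_insert_of_mem _ (Set.mem_insert_of_mem _ (Set.mem_insert_of_mem _ (Set.mem_insert_of_mem _ (Set.mem_insert_of_mem _ (Set.mem_insert _ _))))))) (by decide) h1 h2 _
  · exact ex5_mono_mem_pair 2 5 (Set.mem_insert_of_mem _ (Set.mem_insert_of_mem _ (Set.mem_insert_of_mem _ (Set.mem_insert_of_mem _ (Set.mem_insert_of_mem _ (Set.mem_insert_of_mem _ (Set.mem_insert_of_mem _ (Set.mem_insert _ _)))))))) (by decide) h1 h2 _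
  · exact ex5_mono_mem_triple 3 4 5 (Set.mem_insert_of_mem _ (Set.mem_insert_of_mem _ (Set.mem_insert_of_mem _ (Set.mem_insert_of_mem _ (Set.mem_insert_of_mem _ (Set.mem_insert_of_mem _ (Set.mem_insert_of_mem _ (Set.mem_insert_of_mem _ (Set.mem_singleton _))))))))) (by decide) (by decide) (by decide) h1 h2 h3 _

end A3


variable {K : Type*} [Field K]

lemma ex5_unit_cancel {J : Ideal (MvPolynomial (Fin 6) K)} {s : K} (hs : s ≠ 0)
    {m : MvPolynomial (Fin 6) K} (h : C s * m ∈ J) : m ∈ J := by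
  have h2 := J.mul_mem_left (C s⁻¹) h
  rwa [← mul_assoc, ← C_mul, inv_mul_cancel₀ hs, C_1, one_mul] at h2

end Ex5Aux

/-- **Example 5 (Barile), char = 2.** Let `K` be a field of characteristic `2` and let
`t ∈ K` with `t ≠ 0`, `t ≠ 1`.  In `R = K[x₁,…,x₆]`, the ideal
`I = (x₁x₃, x₁x₄, x₁x₆, x₂x₄, x₂x₅, x₂x₆, x₃x₅, x₃x₆, x₄x₅x₆)` satisfies
`I = √(x₁x₄ + x₃x₅, x₁x₃ + x₂x₆ + x₄x₅x₆, x₁x₆ + t·x₂x₅, x₂x₄ + x₃x₆)`.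
(The variables `x₁,…,x₆` are `X 0, …, X 5`.) -/
theorem example5_char_two (K : Type*) [Field K] (hchar : ringChar K = 2)
    (t : K) (ht0 : t ≠ 0) (ht1 : t ≠ 1) :
    Ideal.span ({X 0 * X 2, X 0 * X 3, X 0 * X 5, X 1 * X 3, X 1 * X 4, X 1 * X 5,
        X 2 * X 4, X 2 * X 5, X 3 * X 4 * X 5} : Set (MvPolynomial (Fin 6) K)) =
      (Ideal.span ({X 0 * X 3 + X 2 * X 4,
        X 0 * X 2 + X 1 * X 5 + X 3 * X 4 * X 5,
        X 0 * X 5 + C t * (X 1 * X 4),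
        X 1 * X 3 + X 2 * X 5} : Set (MvPolynomial (Fin 6) K))).radical := by
  have hK2 : (2 : K) = 0 := by
    have h := (ringChar.spec K 2).mpr (by rw [hchar])
    exact_mod_cast h
  have htwo : (2 : MvPolynomial (Fin 6) K) = 0 := by
    rw [show (2 : MvPolynomial (Fin 6) K) = C (2 : K) from (map_ofNat C 2).symm, hK2, map_zero]
  have h1t : (1 + t) ≠ 0 := by
    intro h
    apply ht1
    linear_combination h - hK2
  apply le_antisymm
  · -- I ≤ radical J
    -- a: A=0 B=1 n=3
    have key_a : (1 + C t) * ((X 0 * X 3 : MvPolynomial (Fin 6) K)) ^ 3 = (((1) * C t) * X 3 ^ 2 * X 4 ^ 2 * X 5 + X 0 * X 3 * X 5 ^ 2 + ((1) * C t + (1)) * X 0 ^ 2 * X 3 ^ 2) * (X 0 * X 3 + X 2 * X 4) + (((1) * C t + (1)) * X 0 * X 3 ^ 2 * X 4) * (X 0 * X 2 + X 1 * X 5 + X 3 * X 4 * X 5) + (X 3 ^ 3 * X 4 ^ 2 + X 0 * X 3 ^ 2 * X 5) * (X 0 * X 5 + C t * (X 1 * X 4)) + (((1) * C t) * X 3 ^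 2 * X 4 ^ 3 + X 0 * X 3 * X 4 * X 5) * (X 1 * X 3 + X 2 * X 5) := by
      linear_combination (norm := ring1) (-(((1) * C t) * X 2 * X 3 ^ 2 * X 4 ^ 3 * X 5 + ((1) * C t) * X 1 * X 3 ^ 3 * X 4 ^ 3 + ((1) * C t + (1)) * X 0 * X 3 ^ 3 * X 4 ^ 2 * X 5 + X 0 * X 2 * X 3 * X 4 * X 5 ^ 2 + ((1) * C t + (1)) * X 0 * X 1 * X 3 ^ 2 * X 4 * X 5 + X 0 ^ 2 * X 3 ^ 2 * X 5 ^ 2 + ((1) * C t + (1)) * X 0 ^ 2 * X 2 * X 3 ^ 2 * X 4) : MvPolynomial (Fin 6) K) * htwo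

    -- b: A=0 B=1 n=3
    have key_b : (1 + C t) * ((X 2 * X 4 : MvPolynomial (Fin 6) K)) ^ 3 = (X 3 ^ 2 * X 4 ^ 2 * X 5 + X 2 * X 4 * X 5 ^ 2 + ((1) * C t + (1)) * X 2 ^ 2 * X 4 ^ 2) * (X 0 * X 3 + X 2 * X 4) + (((1) * C t + (1)) * X 2 * X 3 * X 4 ^ 2) * (X 0 * X 2 + X 1 * X 5 + X 3 * X 4 * X 5) + (X 3 ^ 3 * X 4 ^ 2 + X 2 * X 3 * X 4 * X 5) * (X 0 * X 5 + C t * (X 1 * X 4)) + (((1) * C t) * X 3 ^ 2 * X 4 ^ 3 + X 2 * X 4 ^ 2 * X 5) * (X 1 * X 3 + X 2 * X 5) := by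
      linear_combination (norm := ring1) (-(((1) * C t + (1)) * X 2 * X 3 ^ 2 * X 4 ^ 3 * X 5 + X 2 ^ 2 * X 4 ^ 2 * X 5 ^ 2 + ((1) * C t) * X 1 * X 3 ^ 3 * X 4 ^ 3 + ((1) * C t + (1)) * X 1 * X 2 * X 3 * X 4 ^ 2 * X 5 + X 0 * X 3 ^ 3 * X 4 ^ 2 * X 5 + X 0 * X 2 * X 3 * X 4 * X 5 ^ 2 + ((1) * C t + (1)) * X 0 * X 2 ^ 2 * X 3 * X 4 ^ 2) : MvPolynomial (Fin 6) K) * htwo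

    -- u: A=0 B=1 n=2
    have key_u : (1 + C t) * ((X 3 * X 4 * X 5 : MvPolynomial (Fin 6) K)) ^ 2 = (X 5 ^ 3 + ((1) * C t) * X 2 * X 4 * X 5) * (X 0 * X 3 + X 2 * X 4) + (((1) * C t + (1)) * X 3 * X 4 * X 5) * (X 0 * X 2 + X 1 * X 5 + X 3 * X 4 * X 5) + (X 3 * X 5 ^ 2 + X 2 * X 3 * X 4) * (X 0 * X 5 + C t * (X 1 * X 4)) + (X 4 * X 5 ^ 2 + ((1) * C t) * X 2 * X 4 ^ 2) * (X 1 * X 3 + X 2 * X 5) := by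
      linear_combination (norm := ring1) (-(X 2 * X 4 * X 5 ^ 3 + ((1) * C t) * X 2 ^ 2 * X 4 ^ 2 * X 5 + ((1) * C t + (1)) * X 1 * X 3 * X 4 * X 5 ^ 2 + ((1) * C t) * X 1 * X 2 * X 3 * X 4 ^ 2 + X 0 * X 3 * X 5 ^ 3 + ((1) * C t + (1)) * X 0 * X 2 * X 3 * X 4 * X 5) : MvPolynomial (Fin 6) K) * htwo

    -- c: A=0 B=1 n=2
    have key_c : (1 + C t) * ((X 0 * X 2 : MvPolynomial (Fin 6) K)) ^ 2 = (((1) * C t) * X 2 * X 4 * X 5 + ((1) * C t) * X 1 ^ 2) * (X 0 * X 3 + X 2 * X 4) + (((1) * C t + (1)) * X 0 * X 2) * (X 0 * X 2 + X 1 * X 5 + X 3 * X 4 * X 5) + (X 2 * X 3 * X 4 + X 1 * X 2) * (X 0 * X 5 + C t * (X 1 * X 4)) + (((1) * C t) * X 2 * X 4 ^ 2 + ((1) * C t) * X 0 * X 1) * (X 1 * X 3 + X 2 * X 5) := by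
      linear_combination (norm := ring1) (-(((1) * C t) * X 2 ^ 2 * X 4 ^ 2 * X 5 + ((1) * C t) * X 1 * X 2 * X 3 * X 4 ^ 2 + ((1) * C t) * X 1 ^ 2 * X 2 * X 4 + ((1) * C t + (1)) * X 0 * X 2 * X 3 * X 4 * X 5 + ((1) * C t + (1)) * X 0 * X 1 * X 2 * X 5 + ((1) * C t) * X 0 * X 1 ^ 2 * X 3) : MvPolynomial (Fin 6) K) * htwo

    -- d: A=0 B=1 n=2
    have key_d : (1 + C t) * ((X 1 * X 5 : MvPolynomial (Fin 6) K)) ^ 2 = (X 5 ^ 3 + ((1) * C t) * X 1 ^ 2) * (X 0 * X 3 + X 2 * X 4) + (((1) * C t + (1)) * X 1 * X 5) * (X 0 * X 2 + X 1 * X 5 + X 3 * X 4 * X 5) + (X 3 * X 5 ^ 2 + X 1 * X 2) * (X 0 * X 5 + C t * (X 1 * X 4)) + (X 4 * X 5 ^ 2 + ((1) * C t) * X 0 * X 1) * (X 1 * X 3 + X 2 * X 5) := by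
      linear_combination (norm := ring1) (-(X 2 * X 4 * X 5 ^ 3 + ((1) * C t + (1)) * X 1 * X 3 * X 4 * X 5 ^ 2 + ((1) * C t) * X 1 ^ 2 * X 2 * X 4 + X 0 * X 3 * X 5 ^ 3 + ((1) * C t + (1)) * X 0 * X 1 * X 2 * X 5 + ((1) * C t) * X 0 * X 1 ^ 2 * X 3) : MvPolynomial (Fin 6) K) * htwo

    -- e: A=0 B=1 n=3
    have key_e : (1 + C t) * ((X 0 * X 5 : MvPolynomial (Fin 6) K)) ^ 3 = (((1) * C t ^ 2) * X 0 * X 4 ^ 2 * X 5 ^ 2 + ((1) * C t) * X 0 ^ 3 * X 5) * (X 0 * X 3 + X 2 * X 4) + (((1) * C t ^ 2 + (1) * C t) * X 0 ^ 2 * X 4 * X 5) * (X 0 * X 2 + X 1 * X 5 + X 3 * X 4 * X 5) + (((1) * C t) * X 0 * X 3 * X 4 ^ 2 * X 5 + ((1) * C t + (1)) * X 0 ^ 2 * X 5 ^ 2 + ((1) * C t) * X 0 ^ 3 * X 3) * (X 0 * X 5 + C t * (X 1 * X 4)) + (((1) * C t ^ 2) * X 0 * X 4 ^ 3 * X 5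 + ((1) * C t ^ 2) * X 0 ^ 3 * X 4) * (X 1 * X 3 + X 2 * X 5) := by
      linear_combination (norm := ring1) (-(((1) * C t ^ 2) * X 0 * X 2 * X 4 ^ 3 * X 5 ^ 2 + ((1) * C t ^ 2) * X 0 * X 1 * X 3 * X 4 ^ 3 * X 5 + ((1) * C t ^ 2 + (1) * C t) * X 0 ^ 2 * X 3 * X 4 ^ 2 * X 5 ^ 2 + ((1) * C t ^ 2 + (1) * C t) * X 0 ^ 2 * X 1 * X 4 * X 5 ^ 2 + ((1) * C t ^ 2 + (1) * C t) * X 0 ^ 3 * X 2 * X 4 * X 5 + ((1) * C t ^ 2) * X 0 ^ 3 * X 1 * X 3 * X 4 + ((1) * C t) * X 0 ^ 4 * X 3 * X 5) : MvPolynomial (Fin 6) K) * htwo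

    -- g: A=1 B=1 n=3
    have key_g : C t * (1 + C t) * ((X 1 * X 4 : MvPolynomial (Fin 6) K)) ^ 3 = (((1) * C t) * X 1 * X 4 ^ 3 * X 5 + ((1) * C t + (1)) * X 0 ^ 2 * X 1 * X 4 + X 0 ^ 3 * X 5) * (X 0 * X 3 + X 2 * X 4) + (((1) * C t + (1)) * X 0 * X 1 * X 4 ^ 2) * (X 0 * X 2 + X 1 * X 5 + X 3 * X 4 * X 5) + (X 1 * X 3 * X 4 ^ 3 + ((1) * C t + (1)) * X 1 ^ 2 * X 4 ^ 2 + X 0 ^ 3 * X 3) * (X 0 * X 5 + C t * (X 1 * X 4)) + (((1) * C t) * X 1 * X 4 ^ 4 + X 0 ^ 3 * X 4) * (X 1 * X 3 + X 2 * X 5) := by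
      linear_combination (norm := ring1) (-(((1) * C t) * X 1 * X 2 * X 4 ^ 4 * X 5 + ((1) * C t) * X 1 ^ 2 * X 3 * X 4 ^ 4 + ((1) * C t + (1)) * X 0 * X 1 * X 3 * X 4 ^ 3 * X 5 + ((1) * C t + (1)) * X 0 * X 1 ^ 2 * X 4 ^ 2 * X 5 + ((1) * C t + (1)) * X 0 ^ 2 * X 1 * X 2 * X 4 ^ 2 + X 0 ^ 3 * X 2 * X 4 * X 5 + ((1) * C t + (1)) * X 0 ^ 3 * X 1 * X 3 * X 4 + X 0 ^ 4 * X 3 * X 5) : MvPolynomial (Fin 6) K) * htwo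

    -- h: A=0 B=1 n=3
    have key_h : (1 + C t) * ((X 1 * X 3 : MvPolynomial (Fin 6) K)) ^ 3 = (X 2 ^ 3 * X 5 + X 1 * X 3 ^ 3 * X 5 + ((1) * C t + (1)) * X 1 * X 2 ^ 2 * X 3) * (X 0 * X 3 + X 2 * X 4) + (((1) * C t + (1)) * X 1 * X 2 * X 3 ^ 2) * (X 0 * X 2 + X 1 * X 5 + X 3 * X 4 * X 5) + (X 2 ^ 3 * X 3 + X 1 * X 3 ^ 4) * (X 0 * X 5 + C t * (X 1 * X 4)) + (X 2 ^ 3 * X 4 + ((1) * C t) * X 1 * X 3 ^ 3 * X 4 + ((1) * C t + (1)) * X 1 ^ 2 * X 3 ^ 2) * (X 1 * X 3 + X 2 * X 5) := by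
      linear_combination (norm := ring1) (-(X 2 ^ 4 * X 4 * X 5 + ((1) * C t + (1)) * X 1 * X 2 * X 3 ^ 3 * X 4 * X 5 + ((1) * C t + (1)) * X 1 * X 2 ^ 3 * X 3 * X 4 + ((1) * C t) * X 1 ^ 2 * X 3 ^ 4 * X 4 + ((1) * C t + (1)) * X 1 ^ 2 * X 2 * X 3 ^ 2 * X 5 + X 0 * X 2 ^ 3 * X 3 * X 5 + X 0 * X 1 * X 3 ^ 4 * X 5 + ((1) * C t + (1)) * X 0 * X 1 * X 2 ^ 2 * X 3 ^ 2) : MvPolynomial (Fin 6) K) * htwo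

    -- k: A=0 B=1 n=3
    have key_k : (1 + C t) * ((X 2 * X 5 : MvPolynomial (Fin 6) K)) ^ 3 = (X 2 * X 3 ^ 2 * X 5 ^ 2 + ((1) * C t) * X 2 ^ 3 * X 5) * (X 0 * X 3 + X 2 * X 4) + (((1) * C t + (1)) * X 2 ^ 2 * X 3 * X 5) * (X 0 * X 2 + X 1 * X 5 + X 3 * X 4 * X 5) + (X 2 * X 3 ^ 3 * X 5 + X 2 ^ 3 * X 3) * (X 0 * X 5 + C t * (X 1 * X 4)) + (((1) * C t) * X 2 * X 3 ^ 2 * X 4 * X 5 + ((1) * C t + (1)) * X 2 ^ 2 * X 5 ^ 2 + ((1) * C t) * X 2 ^ 3 * X 4) * (X 1 * X 3 + X 2 * X 5) := by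
      linear_combination (norm := ring1) (-(((1) * C t + (1)) * X 2 ^ 2 * X 3 ^ 2 * X 4 * X 5 ^ 2 + ((1) * C t) * X 2 ^ 4 * X 4 * X 5 + ((1) * C t) * X 1 * X 2 * X 3 ^ 3 * X 4 * X 5 + ((1) * C t + (1)) * X 1 * X 2 ^ 2 * X 3 * X 5 ^ 2 + ((1) * C t) * X 1 * X 2 ^ 3 * X 3 * X 4 + X 0 * X 2 * X 3 ^ 3 * X 5 ^ 2 + ((1) * C t + (1)) * X 0 * X 2 ^ 3 * X 3 * X 5) : MvPolynomial (Fin 6) K) * htwo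

    rw [Ideal.span_le]
    rintro q hq
    simp only [Set.mem_insert_iff, Set.mem_singleton_iff] at hq
    rcases hq with rfl | rfl | rfl | rfl | rfl | rfl | rfl | rfl | rfl
    · refine Ideal.mem_radical_iff.mpr ⟨2, ex5_unit_cancel h1t ?_⟩
      rw [map_add, C_1, key_c]
      exact Ideal.add_mem _ (Ideal.add_mem _ (Ideal.add_mem _ (Ideal.mul_mem_left _ _ (Ideal.subset_span (Set.mem_insert _ _))) (Ideal.mul_mem_left _ _ (Ideal.subset_span (Set.mem_insert_of_mem _ (Set.mem_insert _ _))))) (Ideal.mul_mem_left _ _ (Ideal.subset_span (Set.mem_insert_of_mem _ (Set.mem_insert_of_mem _ (Set.mem_insert _ _)))))) (Ideal.mul_mem_left _ _ (Ideal.subset_span (Set.mem_insert_of_mem _ (Set.mem_insert_of_mem _ (Set.mem_insert_of_mem _ (Set.mem_singleton _))))))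
    · refine Ideal.mem_radical_iff.mpr ⟨3, ex5_unit_cancel h1t ?_⟩
      rw [map_add, C_1, key_a]
      exact Ideal.add_mem _ (Ideal.add_mem _ (Ideal.add_mem _ (Ideal.mul_mem_left _ _ (Ideal.subset_span (Set.mem_insert _ _))) (Ideal.mul_mem_left _ _ (Ideal.subset_span (Set.mem_insert_of_mem _ (Set.mem_insert _ _))))) (Ideal.mul_mem_left _ _ (Ideal.subset_span (Set.mem_insert_of_mem _ (Set.mem_insert_of_mem _ (Set.mem_insert _ _)))))) (Ideal.mul_mem_left _ _ (Ideal.subset_span (Set.mem_insert_of_mem _ (Set.mem_insert_of_mem _ (Set.mem_insert_of_mem _ (Set.mem_singleton _))))))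
    · refine Ideal.mem_radical_iff.mpr ⟨3, ex5_unit_cancel h1t ?_⟩
      rw [map_add, C_1, key_e]
      exact Ideal.add_mem _ (Ideal.add_mem _ (Ideal.add_mem _ (Ideal.mul_mem_left _ _ (Ideal.subset_span (Set.mem_insert _ _))) (Ideal.mul_mem_left _ _ (Ideal.subset_span (Set.mem_insert_of_mem _ (Set.mem_insert _ _))))) (Ideal.mul_mem_left _ _ (Ideal.subset_span (Set.mem_insert_of_mem _ (Set.mem_insert_of_mem _ (Set.mem_insert _ _)))))) (Ideal.mul_mem_left _ _ (Ideal.subset_span (Set.mem_insert_of_mem _ (Set.mem_insert_of_mem _ (Set.mem_insert_of_mem _ (Set.mem_singleton _))))))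
    · refine Ideal.mem_radical_iff.mpr ⟨3, ex5_unit_cancel h1t ?_⟩
      rw [map_add, C_1, key_h]
      exact Ideal.add_mem _ (Ideal.add_mem _ (Ideal.add_mem _ (Ideal.mul_mem_left _ _ (Ideal.subset_span (Set.mem_insert _ _))) (Ideal.mul_mem_left _ _ (Ideal.subset_span (Set.mem_insert_of_mem _ (Set.mem_insert _ _))))) (Ideal.mul_mem_left _ _ (Ideal.subset_span (Set.mem_insert_of_mem _ (Set.mem_insert_of_mem _ (Set.mem_insert _ _)))))) (Ideal.mul_mem_left _ _ (Ideal.subset_span (Set.mem_insert_of_mem _ (Set.mem_insert_of_mem _ (Set.mem_insert_of_mem _ (Set.mem_singleton _))))))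
    · refine Ideal.mem_radical_iff.mpr ⟨3, ex5_unit_cancel (mul_ne_zero ht0 h1t) ?_⟩
      rw [map_mul, map_add, C_1, key_g]
      exact Ideal.add_mem _ (Ideal.add_mem _ (Ideal.add_mem _ (Ideal.mul_mem_left _ _ (Ideal.subset_span (Set.mem_insert _ _))) (Ideal.mul_mem_left _ _ (Ideal.subset_span (Set.mem_insert_of_mem _ (Set.mem_insert _ _))))) (Ideal.mul_mem_left _ _ (Ideal.subset_span (Set.mem_insert_of_mem _ (Set.mem_insert_of_mem _ (Set.mem_insert _ _)))))) (Ideal.mul_mem_left _ _ (Ideal.subset_span (Set.mem_insert_of_mem _ (Set.mem_insert_of_mem _ (Set.mem_insert_of_mem _ (Set.mem_singleton _))))))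
    · refine Ideal.mem_radical_iff.mpr ⟨2, ex5_unit_cancel h1t ?_⟩
      rw [map_add, C_1, key_d]
      exact Ideal.add_mem _ (Ideal.add_mem _ (Ideal.add_mem _ (Ideal.mul_mem_left _ _ (Ideal.subset_span (Set.mem_insert _ _))) (Ideal.mul_mem_left _ _ (Ideal.subset_span (Set.mem_insert_of_mem _ (Set.mem_insert _ _))))) (Ideal.mul_mem_left _ _ (Ideal.subset_span (Set.mem_insert_of_mem _ (Set.mem_insert_of_mem _ (Set.mem_insert _ _)))))) (Ideal.mul_mem_left _ _ (Ideal.subset_span (Set.mem_insert_of_mem _ (Set.mem_insert_of_mem _ (Set.mem_insert_of_mem _ (Set.mem_singleton _))))))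
    · refine Ideal.mem_radical_iff.mpr ⟨3, ex5_unit_cancel h1t ?_⟩
      rw [map_add, C_1, key_b]
      exact Ideal.add_mem _ (Ideal.add_mem _ (Ideal.add_mem _ (Ideal.mul_mem_left _ _ (Ideal.subset_span (Set.mem_insert _ _))) (Ideal.mul_mem_left _ _ (Ideal.subset_span (Set.mem_insert_of_mem _ (Set.mem_insert _ _))))) (Ideal.mul_mem_left _ _ (Ideal.subset_span (Set.mem_insert_of_mem _ (Set.mem_insert_of_mem _ (Set.mem_insert _ _)))))) (Ideal.mul_mem_left _ _ (Ideal.subset_span (Set.mem_insert_of_mem _ (Set.mem_insert_of_mem _ (Set.mem_insert_of_mem _ (Set.mem_singleton _))))))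
    · refine Ideal.mem_radical_iff.mpr ⟨3, ex5_unit_cancel h1t ?_⟩
      rw [map_add, C_1, key_k]
      exact Ideal.add_mem _ (Ideal.add_mem _ (Ideal.add_mem _ (Ideal.mul_mem_left _ _ (Ideal.subset_span (Set.mem_insert _ _))) (Ideal.mul_mem_left _ _ (Ideal.subset_span (Set.mem_insert_of_mem _ (Set.mem_insert _ _))))) (Ideal.mul_mem_left _ _ (Ideal.subset_span (Set.mem_insert_of_mem _ (Set.mem_insert_of_mem _ (Set.mem_insert _ _)))))) (Ideal.mul_mem_left _ _ (Ideal.subset_span (Set.mem_insert_of_mem _ (Set.mem_insert_of_mem _ (Set.mem_insert_of_mem _ (Set.mem_singleton _))))))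
    · refine Ideal.mem_radical_iff.mpr ⟨2, ex5_unit_cancel h1t ?_⟩
      rw [map_add, C_1, key_u]
      exact Ideal.add_mem _ (Ideal.add_mem _ (Ideal.add_mem _ (Ideal.mul_mem_left _ _ (Ideal.subset_span (Set.mem_insert _ _))) (Ideal.mul_mem_left _ _ (Ideal.subset_span (Set.mem_insert_of_mem _ (Set.mem_insert _ _))))) (Ideal.mul_mem_left _ _ (Ideal.subset_span (Set.mem_insert_of_mem _ (Set.mem_insert_of_mem _ (Set.mem_insert _ _)))))) (Ideal.mul_mem_left _ _ (Ideal.subset_span (Set.mem_insert_of_mem _ (Set.mem_insert_of_mem _ (Set.mem_insert_of_mem _ (Set.mem_singleton _))))))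
  · -- radical J ≤ I
    intro p hp
    obtain ⟨n, hn⟩ := hp
    apply ex5_mem_span_of_good
    intro μ hμ
    by_contra hbad
    push_neg at hbad
    obtain ⟨g1, g2, g3, g4, g5, g6, g7, g8, g9⟩ := hbad
    set σf : Fin 6 → MvPolynomial (Fin 6) K :=
      fun i => if μ i = 0 then 0 else X i with hσf
    have z : ∀ i j : Fin 6, (μ i ≠ 0 → μ j = 0) → σf i * σf j = 0 := by
      intro i j hij
      by_cases h : μ i = 0
      · simp [hσf, h]
      · simp [hσf, h, hij h]
    have h345 : σf 3 * σf 4 * σf 5 = 0 := by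
      by_cases h3 : μ 3 = 0
      · simp [hσf, h3]
      · by_cases h4 : μ 4 = 0
        · simp [hσf, h4]
        · simp [hσf, h3, h4, g9 h3 h4]
    have hJker : Ideal.span ({X 0 * X 3 + X 2 * X 4,
        X 0 * X 2 + X 1 * X 5 + X 3 * X 4 * X 5,
        X 0 * X 5 + C t * (X 1 * X 4),
        X 1 * X 3 + X 2 * X 5} : Set (MvPolynomial (Fin 6) K)) ≤
        RingHom.ker (aeval σf : MvPolynomial (Fin 6) K →ₐ[K] MvPolynomial (Fin 6) K) := by
      rw [Ideal.span_le]
      rintro q hq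
      simp only [Set.mem_insert_iff, Set.mem_singleton_iff] at hq
      have hker : ∀ r : MvPolynomial (Fin 6) K, aeval σf r = 0 →
          r ∈ RingHom.ker (aeval σf : MvPolynomial (Fin 6) K →ₐ[K] MvPolynomial (Fin 6) K) :=
        fun r hr => hr
      rcases hq with rfl | rfl | rfl | rfl
      · refine hker _ ?_
        simp only [map_add, map_mul, aeval_X]
        rw [z 0 3 g2, z 2 4 g7, add_zero]
      · refine hker _ ?_
        simp only [map_add, map_mul, aeval_X]
        rw [z 0 2 g1, z 1 5 g6, h345, add_zero, add_zero]
      · refine hker _ ?_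
        simp only [map_add, map_mul, aeval_X, aeval_C, algebraMap_eq]
        rw [z 0 5 g3, z 1 4 g5, mul_zero, add_zero]
      · refine hker _ ?_
        simp only [map_add, map_mul, aeval_X]
        rw [z 1 3 g4, z 2 5 g8, add_zero]
    have hpow : (aeval σf p) ^ n = 0 := by
      rw [← map_pow]
      exact hJker hn
    have hφp : aeval σf p = 0 := by
      rcases Nat.eq_zero_or_pos n with rfl | hn0
      · rw [pow_zero] at hpow
        exact absurd hpow one_ne_zero
      · exact (pow_eq_zero_iff hn0.ne').mp hpow
    have hc := ex5_coeff_aeval μ p μ (fun i hi => hi)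
    rw [hφp, coeff_zero] at hc
    exact (mem_support_iff.mp hμ) hc.symm
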